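/- The priority axiom τ.E + F = τ.E + pri(F) is sound for observational congruence: for all processes P, Q, τ.P + Q ≃ τ.P + pri(Q). -/

import Mathlib

namespace PrioCalc

inductive Act where
  | tau : Act
  | vis : ℕ → Act
  | delta : Act
deriving DecidableEq

inductive Expr where
  | nil : Expr
  | var : ℕ → Expr
  | pre : Act → Expr → Expr
  | sum : Expr → Expr → Expr
  | recur : ℕ → Expr → Expr
  | pri : Expr → Expr
deriving DecidableEq

/-- Syntactic substitution of `F` for the free occurrences of variable `x`. -/
def subst : Expr → ℕ → Expr → Expr
  | .nil, _, _ => .nil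
  | .var m, x, F => if m = x then F else .var m
  | .pre γ E, x, F => .pre γ (subst E x F)
  | .sum E G, x, F => .sum (subst E x F) (subst G x F)
  | .recur y E, x, F => if y = x then .recur y E else .recur y (subst E x F)
  | .pri E, x, F => .pri (subst E x F)

/-- `free E x` : `x` occurs free in `E`. -/
def free : Expr → ℕ → Prop
  | .nil, _ => False
  | .var m, x => m = x
  | .pre _ E, x => free E x
  | .sum E G, x => free E x ∨ free G x
  | .recur y E, x => x ≠ y ∧ free E x
  | .pri E, x => free E x

def Closed (E : Expr) : Prop := ∀ x, ¬ free E x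

/-- Standard (non-δ) transitions; these never depend on δ-transitions. -/
inductive StepStd : Expr → Act → Expr → Prop where
  | pre {α : Act} (h : α ≠ Act.delta) (E : Expr) : StepStd (.pre α E) α E
  | sumL {P α P'} (Q : Expr) : StepStd P α P' → StepStd (.sum P Q) α P'
  | sumR {Q α Q'} (P : Expr) : StepStd Q α Q' → StepStd (.sum P Q) α Q'
  | unf {x E γ P'} : StepStd (subst E x (.recur x E)) γ P' → StepStd (.recur x E) γ P'
  | pri {P α P'} : StepStd P α P' → StepStd (.pri P) α P'

def CanTau (P : Expr) : Prop := ∃ P', StepStd P Act.tau P'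

/-- δ-transitions (stratified: the negative premise refers to standard transitions). -/
inductive StepDel : Expr → Expr → Prop where
  | pre (E : Expr) : StepDel (.pre Act.delta E) E
  | sumL {P P'} (Q : Expr) : StepDel P P' → ¬ CanTau Q → StepDel (.sum P Q) P'
  | sumR {Q Q'} (P : Expr) : StepDel Q Q' → ¬ CanTau P → StepDel (.sum P Q) Q'
  | unf {x E P'} : StepDel (subst E x (.recur x E)) P' → StepDel (.recur x E) P'

/-- The full (prioritized) transition relation. -/
def Step (P : Expr) (γ : Act) (Q : Expr) : Prop :=
  if γ = Act.delta then StepDel P Q else StepStd P γ Q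

def TauStar : Expr → Expr → Prop :=
  Relation.ReflTransGen (fun P Q => Step P Act.tau Q)

/-- Weak transition `==γ==>` : τ* γ τ* (at least one γ step). -/
def Weak (P : Expr) (γ : Act) (Q : Expr) : Prop :=
  ∃ P₁ P₂, TauStar P P₁ ∧ Step P₁ γ P₂ ∧ TauStar P₂ Q

/-- Weak transition `==γ̂==>`. -/
def WeakHat (P : Expr) (γ : Act) (Q : Expr) : Prop :=
  if γ = Act.tau then TauStar P Q else Weak P γ Q

def IsWeakBisim (β : Expr → Expr → Prop) : Prop :=
  ∀ P Q, β P Q →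
    (∀ γ P', Step P γ P' → ∃ Q', WeakHat Q γ Q' ∧ β P' Q') ∧
    (∀ γ Q', Step Q γ Q' → ∃ P', WeakHat P γ P' ∧ β P' Q')

/-- Weak bisimilarity `≈`. -/
def WBisim (P Q : Expr) : Prop := ∃ β, IsWeakBisim β ∧ β P Q

/-- Observational congruence `≃`. -/
def ObsCong (P Q : Expr) : Prop :=
  (∀ γ P', Step P γ P' → ∃ Q', Weak Q γ Q' ∧ WBisim P' Q') ∧
  (∀ γ Q', Step Q γ Q' → ∃ P', Weak P γ P' ∧ WBisim P' Q')

/-- Terms of the basic calculus (no occurrence of the auxiliary `pri` operator). -/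
def PriFree : Expr → Prop
  | .nil => True
  | .var _ => True
  | .pre _ E => PriFree E
  | .sum E F => PriFree E ∧ PriFree F
  | .recur _ E => PriFree E
  | .pri _ => False

/-- Every free occurrence of `x` in `E` is (strongly) guarded. -/
def GVar : Expr → ℕ → Prop
  | .nil, _ => True
  | .var m, x => m ≠ x
  | .pre γ E, x => γ = Act.tau → GVar E x
  | .sum E F, x => GVar E x ∧ GVar F x
  | .recur y E, x => y ≠ x → GVar E x
  | .pri E, x => GVar E x

/-- `E` is (strongly) guarded: every recursion subterm is guarded. -/
def Guarded : Expr → Prop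
  | .nil => True
  | .var _ => True
  | .pre _ E => Guarded E
  | .sum E F => Guarded E ∧ Guarded F
  | .recur y E => GVar E y ∧ Guarded E
  | .pri E => Guarded E

/-- Some free occurrence of `x` in `E` is unguarded (not under a non-τ prefix). -/
def UnguardedVar : Expr → ℕ → Prop
  | .nil, _ => False
  | .var m, x => m = x
  | .pre γ E, x => γ = Act.tau ∧ UnguardedVar E x
  | .sum E F, x => UnguardedVar E x ∨ UnguardedVar F x
  | .recur y E, x => y ≠ x ∧ UnguardedVar E x
  | .pri E, x => UnguardedVar E x

/-- `x` is serial in `E` : every subexpression containing `x` free, apart from `x`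
itself, is a prefix, a sum or a recursion. -/
def SerialVar : Expr → ℕ → Prop
  | .nil, _ => True
  | .var _, _ => True
  | .pre _ E, x => SerialVar E x
  | .sum E F, x => SerialVar E x ∧ SerialVar F x
  | .recur y E, x => y = x ∨ SerialVar E x
  | .pri E, x => ¬ free E x

/-- Simultaneous substitution of closed terms for free variables. -/
def msubst : Expr → (ℕ → Expr) → Expr
  | .nil, _ => .nil
  | .var m, σ => σ m
  | .pre γ E, σ => .pre γ (msubst E σ)
  | .sum E F, σ => .sum (msubst E σ) (msubst F σ)
  | .recur y E, σ => .recur y (msubst E (Function.update σ y (.var y)))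
  | .pri E, σ => .pri (msubst E σ)

/-- Observational congruence on open terms (via closed substitutions). -/
def ObsCongO (E F : Expr) : Prop :=
  ∀ σ : ℕ → Expr, (∀ n, Closed (σ n)) → ObsCong (msubst E σ) (msubst F σ)

/-- The axiom system 𝒜. -/
inductive Prov : Expr → Expr → Prop where
  | refl (E) : Prov E E
  | symm {E F} : Prov E F → Prov F E
  | trans {E F G} : Prov E F → Prov F G → Prov E G
  | congPre (γ) {E F} : Prov E F → Prov (.pre γ E) (.pre γ F)
  | congSum {E E' F F'} : Prov E E' → Prov F F' → Prov (.sum E F) (.sum E' F')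
  | congRec (x) {E F} : Prov E F → Prov (.recur x E) (.recur x F)
  | congPri {E F} : Prov E F → Prov (.pri E) (.pri F)
  | a1 (E F) : Prov (.sum E F) (.sum F E)
  | a2 (E F G) : Prov (.sum (.sum E F) G) (.sum E (.sum F G))
  | a3 (E) : Prov (.sum E E) E
  | a4 (E) : Prov (.sum E .nil) E
  | tau1 (γ E) : Prov (.pre γ (.pre Act.tau E)) (.pre γ E)
  | tau2 (E) : Prov (.sum E (.pre Act.tau E)) (.pre Act.tau E)
  | tau3 (γ E F) :
      Prov (.sum (.pre γ (.sum E (.pre Act.tau F))) (.pre γ F))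
           (.pre γ (.sum E (.pre Act.tau F)))
  | pri1 : Prov (.pri .nil) .nil
  | pri2 {α} (h : α ≠ Act.delta) (E) : Prov (.pri (.pre α E)) (.pre α E)
  | pri3 (E) : Prov (.pri (.pre Act.delta E)) .nil
  | pri4 (E F) : Prov (.pri (.sum E F)) (.sum (.pri E) (.pri F))
  | pri5 (E) : Prov (.pri (.pri E)) (.pri E)
  | pri6 (E F) : Prov (.sum (.pre Act.tau E) F) (.sum (.pre Act.tau E) (.pri F))
  | rec1 (x E) : Prov (.recur x E) (subst E x (.recur x E))
  | rec2 {x E F} (hs : SerialVar E x) (hg : GVar E x) :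
      Prov F (subst E x F) → Prov F (.recur x E)
  | ung1 (x E) : Prov (.recur x (.sum (.var x) E)) (.recur x E)
  | ung2 (x E) :
      Prov (.recur x (.sum (.pre Act.tau (.var x)) E)) (.recur x (.pre Act.tau (.pri E)))
  | ung3 (x E F) :
      Prov (.recur x (.sum (.pre Act.tau (.sum (.var x) E)) F))
           (.recur x (.sum (.sum (.pre Act.tau (.var x)) E) F))
  | ung4 (x E F) :
      Prov (.recur x (.sum (.pre Act.tau (.sum (.pri (.var x)) E)) F))
           (.recur x (.sum (.sum (.pre Act.tau (.var x)) E) F))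

/-- Standard equation sets: formal variables are `X i = var i` for `i < n`,
free variables are variables `≥ n`. -/
structure StdEqSet (n : ℕ) where
  pres : Fin n → List (Act × Fin n)
  frees : Fin n → List ℕ
  frees_ge : ∀ i, ∀ w ∈ frees i, n ≤ w

/-- The body `H_i{Ẽ/X̃}` of the `i`-th equation with expressions `Es` for the
formal variables. -/
def instBody {n : ℕ} (S : StdEqSet n) (Es : Fin n → Expr) (i : Fin n) : Expr :=
  (S.pres i).foldr (fun p acc => Expr.sum (Expr.pre p.1 (Es p.2)) acc)
    ((S.frees i).foldr (fun w acc => Expr.sum (Expr.var w) acc) Expr.nil)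

/-- `E` provably satisfies `S` (distinguished variable `X 0`). -/
def ProvSat {n : ℕ} (hn : 0 < n) (E : Expr) (S : StdEqSet n) : Prop :=
  ∃ Es : Fin n → Expr, Es ⟨0, hn⟩ = E ∧
    (∀ i x, free (Es i) x → n ≤ x) ∧
    (∀ i, Prov (Es i) (instBody S Es i))

/-- No equation contains both a τ-prefixed and a δ-prefixed summand. -/
def Prioritized {n : ℕ} (S : StdEqSet n) : Prop :=
  ∀ i, (∃ j, (Act.tau, j) ∈ S.pres i) → ∀ j, (Act.delta, j) ∉ S.pres i

/-- No cycle of unguarded (i.e. τ-prefixed) dependencies. -/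
def EqGuarded {n : ℕ} (S : StdEqSet n) : Prop :=
  ∀ i : Fin n, ¬ Relation.TransGen (fun i j : Fin n => (Act.tau, j) ∈ S.pres i) i i

/-- Delete every δ-prefixed summand from equations that also contain a
τ-prefixed summand. -/
def prioritize {n : ℕ} (S : StdEqSet n) : StdEqSet n where
  pres i := if (S.pres i).any (fun p => decide (p.1 = Act.tau))
            then (S.pres i).filter (fun p => decide (p.1 ≠ Act.delta))
            else S.pres i
  frees := S.frees
  frees_ge := S.frees_ge

/-! Since `τ.P + Q` can perform `τ`, it has no `δ`-transitions, so its transitions are exactly the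
standard ones of `τ.P` and of `Q`; and `pri(Q)` has exactly the standard transitions of `Q`.
Hence both sides of the axiom have the same transitions, with identical derivatives. -/

theorem StepStd.ne_delta {P R : Expr} {α : Act} (h : StepStd P α R) : α ≠ Act.delta := by
  induction h with
  | pre hα => exact hα
  | sumL _ _ ih | sumR _ _ ih | unf _ ih | pri _ ih => exact ih

theorem StepStd.sum_iff {P Q R : Expr} {α : Act} :
    StepStd (.sum P Q) α R ↔ StepStd P α R ∨ StepStd Q α R := by
  constructor
  · rintro (_ | ⟨_, h⟩ | ⟨_, h⟩)
    exacts [Or.inl h, Or.inr h]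
  · rintro (h | h)
    exacts [.sumL Q h, .sumR P h]

theorem StepStd.pri_iff {P R : Expr} {α : Act} : StepStd (.pri P) α R ↔ StepStd P α R :=
  ⟨fun | .pri h => h, .pri⟩

theorem canTau_sum_pre_tau (P Q : Expr) : CanTau (.sum (.pre Act.tau P) Q) :=
  ⟨P, .sumL Q (.pre Act.noConfusion P)⟩

theorem StepDel.not_canTau {P R : Expr} (h : StepDel P R) : ¬ CanTau P := by
  induction h with
  | pre _ => rintro ⟨_, ⟨⟩⟩
  | sumL Q _ hQ ih =>
    rintro ⟨_, h⟩
    rcases StepStd.sum_iff.1 h with h | h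
    exacts [ih ⟨_, h⟩, hQ ⟨_, h⟩]
  | sumR P _ hP ih =>
    rintro ⟨_, h⟩
    rcases StepStd.sum_iff.1 h with h | h
    exacts [hP ⟨_, h⟩, ih ⟨_, h⟩]
  | unf _ ih =>
    rintro ⟨_, h⟩
    cases h with
    | unf h => exact ih ⟨_, h⟩

theorem step_iff_stepStd_of_canTau {P R : Expr} {γ : Act} (hP : CanTau P) :
    Step P γ R ↔ StepStd P γ R := by
  unfold Step
  split_ifs with hγ
  · subst hγ
    exact iff_of_false (fun h => h.not_canTau hP) (fun h => h.ne_delta rfl)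
  · rfl

theorem weak_of_step {P R : Expr} {γ : Act} (h : Step P γ R) : Weak P γ R :=
  ⟨P, R, .refl, h, .refl⟩

theorem weakHat_of_step {P R : Expr} {γ : Act} (h : Step P γ R) : WeakHat P γ R := by
  unfold WeakHat
  split_ifs with hγ
  · subst hγ
    exact .single h
  · exact weak_of_step h

theorem isWeakBisim_eq : IsWeakBisim Eq := by
  rintro P _ rfl
  exact ⟨fun _ R h => ⟨R, weakHat_of_step h, rfl⟩, fun _ R h => ⟨R, weakHat_of_step h, rfl⟩⟩

theorem wbisim_refl (P : Expr) : WBisim P P :=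
  ⟨Eq, isWeakBisim_eq, rfl⟩

theorem ObsCong.of_step_iff {P Q : Expr} (h : ∀ γ R, Step P γ R ↔ Step Q γ R) : ObsCong P Q :=
  ⟨fun γ R hR => ⟨R, weak_of_step ((h γ R).1 hR), wbisim_refl R⟩,
   fun γ R hR => ⟨R, weak_of_step ((h γ R).2 hR), wbisim_refl R⟩⟩

theorem pri6_sound_general (P Q : Expr) :
    ObsCong (.sum (.pre Act.tau P) Q) (.sum (.pre Act.tau P) (.pri Q)) := by
  refine ObsCong.of_step_iff fun γ R => ?_
  rw [step_iff_stepStd_of_canTau (canTau_sum_pre_tau P Q),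
    step_iff_stepStd_of_canTau (canTau_sum_pre_tau P (.pri Q)),
    StepStd.sum_iff, StepStd.sum_iff, StepStd.pri_iff]

/-- soundness of (Pri6): τ.E + F = τ.E + pri(F). -/
theorem pri6_sound (P Q : Expr) (hP : Closed P) (hQ : Closed Q) :
    ObsCong (.sum (.pre Act.tau P) Q) (.sum (.pre Act.tau P) (.pri Q)) :=
  pri6_sound_general P Q

end PrioCalc
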